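/- Suppose the pair (𝓖, 𝓗) has mixing coefficient at most ρ̄, and let ξ be an 𝓗-measurable random variable with E[ξ] = 0 and finite moments of all orders. Then for every integer w ≥ 2, E[|E[ξ | 𝓖]|^w] ≤ ρ̄·(E[ξ²])^{1/2}·(E[|E[ξ | 𝓖]|^{2(w−1)}])^{1/2}. Consequently, by conditional Jensen, E[|E[ξ | 𝓖]|^w] ≤ ρ̄·(E[ξ²])^{1/2}·(E[|ξ|^{2(w−1)}])^{1/2}. -/

import Mathlib

/-!
Write `η = E[ξ | 𝓖]` and `g = η |η|^(w-2)`, which is `𝓖`-measurable with `g² = |η|^(2(w-1))`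
and `g η = |η|^w`. Pulling `g` out of the conditional expectation gives
`E|η|^w = E[g η] = E[g ξ]`, and since `ξ` is centred, `E[g ξ] = E[(g - E g) ξ]`. The mixing bound,
rescaled to arbitrary second moments, controls this by `ρ̄ ‖g - E g‖₂ ‖ξ‖₂ ≤ ρ̄ ‖g‖₂ ‖ξ‖₂`.
The second inequality is the first one combined with conditional Jensen,
`E|η|^(2(w-1)) ≤ E|ξ|^(2(w-1))`.
-/

open MeasureTheory

/-- The pair `(G, H)` of σ-algebras has mixing coefficient at most `ρ`. -/
def mixingCoefLE {Ω : Type*} {_m0 : MeasurableSpace Ω} (μ : Measure Ω)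
    (G H : MeasurableSpace Ω) (ρ : ℝ) : Prop :=
  ∀ U V : Ω → ℝ,
    StronglyMeasurable[G] U → StronglyMeasurable[H] V →
    MemLp U 2 μ → MemLp V 2 μ →
    (∫ ω, U ω ∂μ) = 0 → (∫ ω, V ω ∂μ) = 0 →
    (∫ ω, (U ω) ^ 2 ∂μ) ≤ 1 → (∫ ω, (V ω) ^ 2 ∂μ) ≤ 1 →
    |∫ ω, U ω * V ω ∂μ| ≤ ρ

open ProbabilityTheory

section Integral

variable {Ω : Type*} {m m0 : MeasurableSpace Ω} {μ : Measure Ω}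

lemma integral_mul_eq_zero_of_integral_sq_eq_zero {U : Ω → ℝ} (hU : MemLp U 2 μ)
    (h : ∫ ω, U ω ^ 2 ∂μ = 0) (V : Ω → ℝ) : ∫ ω, U ω * V ω ∂μ = 0 := by
  have hU0 : U =ᵐ[μ] 0 := by
    filter_upwards [(integral_eq_zero_iff_of_nonneg (fun ω => sq_nonneg (U ω))
      ((memLp_two_iff_integrable_sq hU.1).1 hU)).1 h] with ω hω
    simpa using hω
  refine integral_eq_zero_of_ae ?_
  filter_upwards [hU0] with ω hω
  simp [hω]

lemma integral_sq_inv_sqrt_integral_sq_mul {U : Ω → ℝ} (h : 0 < ∫ ω, U ω ^ 2 ∂μ) :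
    ∫ ω, ((√(∫ ω, U ω ^ 2 ∂μ))⁻¹ * U ω) ^ 2 ∂μ = 1 := by
  simp_rw [mul_pow, integral_const_mul, inv_pow, Real.sq_sqrt h.le, inv_mul_cancel₀ h.ne']

lemma integral_mul_condExp_of_stronglyMeasurable (hm : m ≤ m0) [SigmaFinite (μ.trim hm)]
    {f g : Ω → ℝ} (hg : StronglyMeasurable[m] g) (hgf : Integrable (g * f) μ)
    (hf : Integrable f μ) :
    ∫ ω, g ω * (μ[f | m]) ω ∂μ = ∫ ω, g ω * f ω ∂μ := by
  calc ∫ ω, g ω * (μ[f | m]) ω ∂μ = ∫ ω, (μ[g * f | m]) ω ∂μ :=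
        integral_congr_ae (condExp_mul_of_stronglyMeasurable_left hg hgf hf).symm
    _ = ∫ ω, g ω * f ω ∂μ := integral_condExp hm

lemma integral_abs_condExp_pow_le {f : Ω → ℝ} {n : ℕ} (hn : n ≠ 0) (hf : MemLp f n μ) :
    ∫ ω, |(μ[f | m]) ω| ^ n ∂μ ≤ ∫ ω, |f ω| ^ n ∂μ := by
  simpa [Real.rpow_natCast] using integral_norm_condExp_rpow_le (m := m) (p := n) (f := f)
    (mod_cast Nat.one_le_iff_ne_zero.mpr hn)
    (by simpa using hf.integrable_norm_rpow (mod_cast hn) (by simp))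

end Integral

namespace mixingCoefLE

variable {Ω : Type*} {m0 : MeasurableSpace Ω} {μ : Measure Ω} {G H : MeasurableSpace Ω} {ρ : ℝ}

lemma nonneg (h : mixingCoefLE μ G H ρ) : 0 ≤ ρ := by
  simpa using h 0 0 stronglyMeasurable_zero stronglyMeasurable_zero MemLp.zero MemLp.zero
    (by simp) (by simp) (by simp) (by simp)

lemma abs_integral_mul_le (h : mixingCoefLE μ G H ρ) {U V : Ω → ℝ}
    (hUm : StronglyMeasurable[G] U) (hVm : StronglyMeasurable[H] V)
    (hU : MemLp U 2 μ) (hV : MemLp V 2 μ)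
    (hU0 : ∫ ω, U ω ∂μ = 0) (hV0 : ∫ ω, V ω ∂μ = 0) :
    |∫ ω, U ω * V ω ∂μ| ≤ ρ * √(∫ ω, U ω ^ 2 ∂μ) * √(∫ ω, V ω ^ 2 ∂μ) := by
  have hρ := h.nonneg
  have hU2 : 0 ≤ ∫ ω, U ω ^ 2 ∂μ := integral_nonneg fun ω => sq_nonneg (U ω)
  have hV2 : 0 ≤ ∫ ω, V ω ^ 2 ∂μ := integral_nonneg fun ω => sq_nonneg (V ω)
  rcases hU2.eq_or_lt with hU2 | hU2
  · simp only [integral_mul_eq_zero_of_integral_sq_eq_zero hU hU2.symm, abs_zero]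
    positivity
  rcases hV2.eq_or_lt with hV2 | hV2
  · simp_rw [mul_comm (U _)]
    simp only [integral_mul_eq_zero_of_integral_sq_eq_zero hV hV2.symm, abs_zero]
    positivity
  set a := √(∫ ω, U ω ^ 2 ∂μ)
  set b := √(∫ ω, V ω ^ 2 ∂μ)
  have ha : 0 < a := Real.sqrt_pos.2 hU2
  have hb : 0 < b := Real.sqrt_pos.2 hV2
  have hnorm := h (fun ω => a⁻¹ * U ω) (fun ω => b⁻¹ * V ω)
    (stronglyMeasurable_const.mul hUm) (stronglyMeasurable_const.mul hVm)
    (hU.const_mul a⁻¹) (hV.const_mul b⁻¹)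
    (by rw [integral_const_mul, hU0, mul_zero]) (by rw [integral_const_mul, hV0, mul_zero])
    (integral_sq_inv_sqrt_integral_sq_mul hU2).le (integral_sq_inv_sqrt_integral_sq_mul hV2).le
  have hscale : ∫ ω, a⁻¹ * U ω * (b⁻¹ * V ω) ∂μ = (a * b)⁻¹ * ∫ ω, U ω * V ω ∂μ := by
    rw [← integral_const_mul]
    congr 1 with ω
    ring
  rw [hscale, abs_mul, abs_of_pos (by positivity), inv_mul_le_iff₀ (by positivity)] at hnorm
  linarith

lemma abs_integral_mul_le_of_integral_right_eq_zero [IsProbabilityMeasure μ]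
    (h : mixingCoefLE μ G H ρ) {U V : Ω → ℝ}
    (hUm : StronglyMeasurable[G] U) (hVm : StronglyMeasurable[H] V)
    (hU : MemLp U 2 μ) (hV : MemLp V 2 μ) (hV0 : ∫ ω, V ω ∂μ = 0) :
    |∫ ω, U ω * V ω ∂μ| ≤ ρ * √(∫ ω, U ω ^ 2 ∂μ) * √(∫ ω, V ω ^ 2 ∂μ) := by
  set c := ∫ ω, U ω ∂μ
  have hcentre : ∫ ω, (U ω - c) * V ω ∂μ = ∫ ω, U ω * V ω ∂μ := by
    simp_rw [sub_mul]
    rw [integral_sub (f := fun ω => U ω * V ω) (hU.integrable_mul hV)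
      ((hV.integrable one_le_two).const_mul c), integral_const_mul, hV0, mul_zero, sub_zero]
  have hvar : ∫ ω, (U ω - c) ^ 2 ∂μ ≤ ∫ ω, U ω ^ 2 ∂μ := by
    simpa [variance_eq_integral hU.aemeasurable] using
      variance_le_expectation_sq hU.aestronglyMeasurable
  have hρ := h.nonneg
  calc |∫ ω, U ω * V ω ∂μ| = |∫ ω, (U ω - c) * V ω ∂μ| := by rw [hcentre]
    _ ≤ ρ * √(∫ ω, (U ω - c) ^ 2 ∂μ) * √(∫ ω, V ω ^ 2 ∂μ) :=
      h.abs_integral_mul_le (hUm.sub stronglyMeasurable_const) hVm (hU.sub (memLp_const c)) hV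
        (by simp [integral_sub (hU.integrable one_le_two), c]) hV0
    _ ≤ ρ * √(∫ ω, U ω ^ 2 ∂μ) * √(∫ ω, V ω ^ 2 ∂μ) := by gcongr

lemma integral_abs_condExp_pow_le [IsProbabilityMeasure μ] (h : mixingCoefLE μ G H ρ)
    (hG : G ≤ m0) {ξ : Ω → ℝ} (hξm : StronglyMeasurable[H] ξ) (hξ : MemLp ξ 2 μ)
    (hξ0 : ∫ ω, ξ ω ∂μ = 0) {k : ℕ} (hη : MemLp (μ[ξ | G]) (2 * (k + 1) : ℕ) μ) :
    ∫ ω, |(μ[ξ | G]) ω| ^ (k + 2) ∂μ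
      ≤ ρ * √(∫ ω, ξ ω ^ 2 ∂μ) * √(∫ ω, |(μ[ξ | G]) ω| ^ (2 * (k + 1)) ∂μ) := by
  set η := μ[ξ | G]
  set g : Ω → ℝ := fun ω => η ω * |η ω| ^ k
  have hηm : StronglyMeasurable[G] η := stronglyMeasurable_condExp
  have hgm : StronglyMeasurable[G] g := hηm.mul (hηm.norm.pow k)
  have hg_sq : ∀ ω, g ω ^ 2 = |η ω| ^ (2 * (k + 1)) := fun ω => by
    rw [mul_pow, ← sq_abs, ← pow_mul, ← pow_add]
    ring_nf
  have hg_mul : ∀ ω, g ω * η ω = |η ω| ^ (k + 2) := fun ω => by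
    rw [mul_right_comm, ← sq, ← sq_abs, ← pow_add, add_comm]
  have hg : MemLp g 2 μ := by
    refine (memLp_two_iff_integrable_sq (hgm.mono hG).aestronglyMeasurable).2 ?_
    simpa [hg_sq] using hη.integrable_norm_pow (by omega)
  calc ∫ ω, |η ω| ^ (k + 2) ∂μ = ∫ ω, g ω * ξ ω ∂μ := by
        simp_rw [← hg_mul]
        exact integral_mul_condExp_of_stronglyMeasurable hG hgm (hg.integrable_mul hξ)
          (hξ.integrable one_le_two)
    _ ≤ |∫ ω, g ω * ξ ω ∂μ| := le_abs_self _
    _ ≤ ρ * √(∫ ω, g ω ^ 2 ∂μ) * √(∫ ω, ξ ω ^ 2 ∂μ) :=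
      h.abs_integral_mul_le_of_integral_right_eq_zero hgm hξm hg hξ hξ0
    _ = ρ * √(∫ ω, ξ ω ^ 2 ∂μ) * √(∫ ω, |η ω| ^ (2 * (k + 1)) ∂μ) := by
      simp_rw [hg_sq]
      ring

end mixingCoefLE

theorem stmt_7_general {Ω : Type*} {m0 : MeasurableSpace Ω} (μ : Measure Ω)
    [IsProbabilityMeasure μ] (G H : MeasurableSpace Ω)
    (hG : G ≤ m0) (ρ : ℝ)
    (hmix : mixingCoefLE μ G H ρ)
    (ξ : Ω → ℝ) (hξm : StronglyMeasurable[H] ξ)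
    (hmom : ∀ r : ℕ, MemLp ξ r μ)
    (hξ0 : (∫ ω, ξ ω ∂μ) = 0) :
    ∀ w : ℕ, 2 ≤ w →
      (∫ ω, |(μ[ξ | G]) ω| ^ w ∂μ)
          ≤ ρ * Real.sqrt (∫ ω, ξ ω ^ 2 ∂μ) *
              Real.sqrt (∫ ω, |(μ[ξ | G]) ω| ^ (2 * (w - 1)) ∂μ)
      ∧ (∫ ω, |(μ[ξ | G]) ω| ^ w ∂μ)
          ≤ ρ * Real.sqrt (∫ ω, ξ ω ^ 2 ∂μ) *
              Real.sqrt (∫ ω, |ξ ω| ^ (2 * (w - 1)) ∂μ) := by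
  intro w hw
  obtain ⟨k, rfl⟩ : ∃ k, w = k + 2 := ⟨w - 2, by omega⟩
  have hξ : MemLp ξ 2 μ := by exact_mod_cast hmom 2
  have hη : MemLp (μ[ξ | G]) (2 * (k + 1) : ℕ) μ :=
    (hmom _).condExp (Nat.one_le_cast.2 (by omega))
  have hmain := hmix.integral_abs_condExp_pow_le hG hξm hξ hξ0 hη
  have hjensen := integral_abs_condExp_pow_le (m := G) (n := 2 * (k + 1)) (by omega) (hmom _)
  have hρ := hmix.nonneg
  refine ⟨hmain, hmain.trans ?_⟩
  gcongr ρ * _ * √?_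
  exact hjensen

/-- For a centered `H`-measurable `ξ` with all moments finite,
`E[|E[ξ|G]|^w] ≤ ρ·(E[ξ²])^{1/2}·(E[|E[ξ|G]|^{2(w−1)}])^{1/2}` and consequently
`E[|E[ξ|G]|^w] ≤ ρ·(E[ξ²])^{1/2}·(E[|ξ|^{2(w−1)}])^{1/2}`, for every `w ≥ 2`. -/
theorem stmt_7 {Ω : Type*} {m0 : MeasurableSpace Ω} (μ : Measure Ω)
    [IsProbabilityMeasure μ] (G H : MeasurableSpace Ω)
    (hG : G ≤ m0) (hH : H ≤ m0) (ρ : ℝ) (hρ : 0 ≤ ρ)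
    (hmix : mixingCoefLE μ G H ρ)
    (ξ : Ω → ℝ) (hξm : StronglyMeasurable[H] ξ)
    (hmom : ∀ r : ℕ, MemLp ξ r μ)
    (hξ0 : (∫ ω, ξ ω ∂μ) = 0) :
    ∀ w : ℕ, 2 ≤ w →
      (∫ ω, |(μ[ξ | G]) ω| ^ w ∂μ)
          ≤ ρ * Real.sqrt (∫ ω, ξ ω ^ 2 ∂μ) *
              Real.sqrt (∫ ω, |(μ[ξ | G]) ω| ^ (2 * (w - 1)) ∂μ)
      ∧ (∫ ω, |(μ[ξ | G]) ω| ^ w ∂μ)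
          ≤ ρ * Real.sqrt (∫ ω, ξ ω ^ 2 ∂μ) *
              Real.sqrt (∫ ω, |ξ ω| ^ (2 * (w - 1)) ∂μ) :=
  stmt_7_general μ G H hG ρ hmix ξ hξm hmom hξ0
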